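/- Let f, g : [0,1] × ℝⁿ → ℝ be smooth with compact support in space uniformly in t, solving ∂ₜ f = ε·L f and ∂ₜ g = −ε·L g where L = (1/2)(Δ − ∇V·∇) and V is smooth, with reference measure m = e^{-V} dx. Then t ↦ ∫ ⟨∇f_t, ∇g_t⟩ dm is constant on [0,1]. -/

import Mathlib

open MeasureTheory Real Set
open scoped RealInnerProductSpace BigOperators

/-- Euclidean Laplacian of `u : ℝⁿ → ℝ`. -/
noncomputable def lapl {n : ℕ} (u : EuclideanSpace ℝ (Fin n) → ℝ)
    (x : EuclideanSpace ℝ (Fin n)) : ℝ :=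
  ∑ i, fderiv ℝ (fun y => fderiv ℝ u y (EuclideanSpace.single i 1)) x
    (EuclideanSpace.single i 1)

/-- The generator `L = (1/2)(Δ - ∇V·∇)`. -/
noncomputable def Lgen {n : ℕ} (V u : EuclideanSpace ℝ (Fin n) → ℝ)
    (x : EuclideanSpace ℝ (Fin n)) : ℝ :=
  (1 / 2) * (lapl u x - ⟪gradient V x, gradient u x⟫)

namespace S9
variable {n : ℕ}

noncomputable def pd (u : EuclideanSpace ℝ (Fin n) → ℝ) (i : Fin n)
    (x : EuclideanSpace ℝ (Fin n)) : ℝ :=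
  fderiv ℝ u x (EuclideanSpace.single i 1)

lemma grad_apply (u : EuclideanSpace ℝ (Fin n) → ℝ) (x : EuclideanSpace ℝ (Fin n)) (i : Fin n) :
    gradient u x i = pd u i x := by
  have h1 : ⟪gradient u x, EuclideanSpace.single i (1:ℝ)⟫
      = fderiv ℝ u x (EuclideanSpace.single i 1) := by
    rw [gradient, ← InnerProductSpace.toDual_apply_apply, LinearIsometryEquiv.apply_symm_apply]
  rw [EuclideanSpace.inner_single_right] at h1
  simpa [pd] using h1

lemma inner_grad (u w : EuclideanSpace ℝ (Fin n) → ℝ) (x : EuclideanSpace ℝ (Fin n)) :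
    ⟪gradient u x, gradient w x⟫ = ∑ i, pd u i x * pd w i x := by
  rw [PiLp.inner_apply]
  exact Finset.sum_congr rfl fun i _ => by rw [grad_apply, grad_apply]; simp [RCLike.inner_apply]; ring

lemma lapl_eq (u : EuclideanSpace ℝ (Fin n) → ℝ) (x : EuclideanSpace ℝ (Fin n)) :
    lapl u x = ∑ i, pd (pd u i) i x := rfl

lemma Lgen_eq (V u : EuclideanSpace ℝ (Fin n) → ℝ) (x : EuclideanSpace ℝ (Fin n)) :
    Lgen V u x = (1/2) * (∑ i, pd (pd u i) i x - ∑ i, pd V i x * pd u i x) := by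
  rw [Lgen, lapl_eq, inner_grad]

lemma contDiff_pd {u : EuclideanSpace ℝ (Fin n) → ℝ} (hu : ContDiff ℝ (⊤ : ℕ∞) u) (i : Fin n) :
    ContDiff ℝ (⊤ : ℕ∞) (pd u i) :=
  (hu.fderiv_right (by simp)).clm_apply contDiff_const

lemma pd_zero_of_not_mem {u : EuclideanSpace ℝ (Fin n) → ℝ} {x : EuclideanSpace ℝ (Fin n)}
    (hx : x ∉ tsupport u) (i : Fin n) : pd u i x = 0 := by
  have : fderiv ℝ u x = 0 := by
    by_contra h
    exact hx (support_fderiv_subset ℝ (by simpa [Function.mem_support] using h))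
  simp [pd, this]

lemma tsupport_pd_subset (u : EuclideanSpace ℝ (Fin n) → ℝ) (i : Fin n) :
    tsupport (pd u i) ⊆ tsupport u := by
  apply closure_minimal _ isClosed_closure
  intro x hx
  by_contra h
  exact hx (pd_zero_of_not_mem h i)

lemma Lgen_zero_of_not_mem {V u : EuclideanSpace ℝ (Fin n) → ℝ} {x : EuclideanSpace ℝ (Fin n)}
    (hx : x ∉ tsupport u) : Lgen V u x = 0 := by
  rw [Lgen_eq]
  have h1 : ∀ i, pd (pd u i) i x = 0 := fun i =>
    pd_zero_of_not_mem (fun h => hx (tsupport_pd_subset u i h)) i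
  have h2 : ∀ i : Fin n, pd u i x = 0 := pd_zero_of_not_mem hx
  simp [h1, h2]

lemma contDiff_Lgen {V u : EuclideanSpace ℝ (Fin n) → ℝ} (hV : ContDiff ℝ (⊤ : ℕ∞) V)
    (hu : ContDiff ℝ (⊤ : ℕ∞) u) : ContDiff ℝ (⊤ : ℕ∞) (Lgen V u) := by
  have : Lgen V u = fun x => (1/2) * (∑ i, pd (pd u i) i x - ∑ i, pd V i x * pd u i x) :=
    funext fun x => Lgen_eq V u x
  rw [this]
  exact contDiff_const.mul ((ContDiff.sum fun i _ => contDiff_pd (contDiff_pd hu i) i).sub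
    (ContDiff.sum fun i _ => (contDiff_pd hV i).mul (contDiff_pd hu i)))


lemma integrable_cs {φ : EuclideanSpace ℝ (Fin n) → ℝ} (hφ : Continuous φ)
    {K : Set (EuclideanSpace ℝ (Fin n))} (hK : IsCompact K) (h : ∀ x ∉ K, φ x = 0) :
    Integrable φ volume :=
  hφ.integrable_of_hasCompactSupport (HasCompactSupport.intro hK h)

lemma pd_exp_neg {V : EuclideanSpace ℝ (Fin n) → ℝ} (hV : ContDiff ℝ (⊤ : ℕ∞) V)
    (i : Fin n) (x : EuclideanSpace ℝ (Fin n)) :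
    pd (fun y => Real.exp (-V y)) i x = -(pd V i x * Real.exp (-V x)) := by
  have h1 : HasFDerivAt (fun y => Real.exp (-V y))
      (Real.exp (-V x) • (-(fderiv ℝ V x))) x :=
    ((hV.differentiable (by simp) x).hasFDerivAt.neg).exp
  rw [pd, h1.fderiv]
  simp [pd, mul_comm]

/-- Per-coordinate integration by parts against `w · exp(-V)`. -/
lemma ibp_coord {V u w : EuclideanSpace ℝ (Fin n) → ℝ} (hV : ContDiff ℝ (⊤ : ℕ∞) V)
    (hu : ContDiff ℝ (⊤ : ℕ∞) u) (hw : ContDiff ℝ (⊤ : ℕ∞) w) (hcu : IsCompact (tsupport u)) (i : Fin n) :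
    ∫ x, pd (pd u i) i x * (w x * Real.exp (-V x))
      = (-∫ x, pd u i x * pd w i x * Real.exp (-V x))
        + ∫ x, pd V i x * pd u i x * w x * Real.exp (-V x) := by
  have hρc : Continuous (fun x : EuclideanSpace ℝ (Fin n) => Real.exp (-V x)) :=
    continuous_exp.comp (hV.continuous.neg)
  have hρd : Differentiable ℝ (fun x : EuclideanSpace ℝ (Fin n) => Real.exp (-V x)) :=
    fun x => ((hV.differentiable (by simp) x).neg).exp
  have hfd : Differentiable ℝ (fun x => w x * Real.exp (-V x)) :=
    (hw.differentiable (by simp)).mul hρd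
  have hgd : Differentiable ℝ (pd u i) := (contDiff_pd hu i).differentiable (by simp)
  have hpdf : ∀ x, fderiv ℝ (fun y => w y * Real.exp (-V y)) x (EuclideanSpace.single i 1)
      = pd w i x * Real.exp (-V x) + w x * -(pd V i x * Real.exp (-V x)) := by
    intro x
    rw [fderiv_fun_mul (hw.differentiable (by simp) x) (hρd x)]
    have h2 := pd_exp_neg hV i x
    simp only [pd] at h2 ⊢
    simp [h2, mul_comm]
    ring
  have hsupp1 : ∀ x ∉ tsupport u, pd u i x = 0 := fun x hx => pd_zero_of_not_mem hx i
  have hsupp2 : ∀ x ∉ tsupport u, pd (pd u i) i x = 0 := fun x hx =>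
    pd_zero_of_not_mem (fun h => hx (tsupport_pd_subset u i h)) i
  have hc_pdu : Continuous (pd u i) := (contDiff_pd hu i).continuous
  have hc_pddu : Continuous (pd (pd u i) i) := (contDiff_pd (contDiff_pd hu i) i).continuous
  have hc_pdw : Continuous (pd w i) := (contDiff_pd hw i).continuous
  have hc_pdV : Continuous (pd V i) := (contDiff_pd hV i).continuous
  have int1 : Integrable
      (fun x => (w x * Real.exp (-V x)) * fderiv ℝ (pd u i) x (EuclideanSpace.single i 1))
      volume := by
    apply integrable_cs (((hw.continuous).mul hρc).mul hc_pddu) hcu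
    intro x hx
    simp only [Pi.mul_apply]; rw [hsupp2 x hx, mul_zero]
  have int2 : Integrable
      (fun x => fderiv ℝ (fun y => w y * Real.exp (-V y)) x (EuclideanSpace.single i 1)
        * pd u i x) volume := by
    apply integrable_cs _ hcu
    · intro x hx; rw [hsupp1 x hx, mul_zero]
    · have hcc : Continuous (fun x =>
          pd w i x * Real.exp (-V x) + w x * -(pd V i x * Real.exp (-V x))) :=
        (hc_pdw.mul hρc).add ((hw.continuous).mul ((hc_pdV.mul hρc).neg))
      exact ((continuous_congr (fun x => (hpdf x).symm)).mp hcc).mul hc_pdu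
  have int3 : Integrable (fun x => (w x * Real.exp (-V x)) * pd u i x) volume := by
    apply integrable_cs (((hw.continuous).mul hρc).mul hc_pdu) hcu
    intro x hx; simp only [Pi.mul_apply]; rw [hsupp1 x hx, mul_zero]
  have intA : Integrable (fun x => pd u i x * pd w i x * Real.exp (-V x)) volume := by
    apply integrable_cs ((hc_pdu.mul hc_pdw).mul hρc) hcu
    intro x hx; simp only [Pi.mul_apply]; rw [hsupp1 x hx]; ring
  have intB : Integrable (fun x => pd V i x * pd u i x * w x * Real.exp (-V x)) volume := by
    apply integrable_cs (((hc_pdV.mul hc_pdu).mul hw.continuous).mul hρc) hcu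
    intro x hx; simp only [Pi.mul_apply]; rw [hsupp1 x hx]; ring
  have key := integral_mul_fderiv_eq_neg_fderiv_mul_of_integrable
    (f := fun x => w x * Real.exp (-V x)) (g := pd u i) (v := EuclideanSpace.single i 1)
    (μ := volume) int2 int1 int3 (fun x _ => hfd x) (fun x _ => hgd x)
  have lhs_eq : ∫ x, (w x * Real.exp (-V x)) * fderiv ℝ (pd u i) x (EuclideanSpace.single i 1)
      = ∫ x, pd (pd u i) i x * (w x * Real.exp (-V x)) := by
    congr 1; funext x; rw [mul_comm]; rfl
  have split : ∫ x, fderiv ℝ (fun y => w y * Real.exp (-V y)) x (EuclideanSpace.single i 1)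
        * pd u i x
      = (∫ x, pd u i x * pd w i x * Real.exp (-V x))
        - ∫ x, pd V i x * pd u i x * w x * Real.exp (-V x) := by
    rw [← integral_sub intA intB]
    congr 1; funext x; rw [hpdf x]; ring
  rw [← lhs_eq, key, split]
  ring

/-- Green / integration-by-parts identity for the weighted Laplacian. -/
lemma green {V u w : EuclideanSpace ℝ (Fin n) → ℝ} (hV : ContDiff ℝ (⊤ : ℕ∞) V)
    (hu : ContDiff ℝ (⊤ : ℕ∞) u) (hw : ContDiff ℝ (⊤ : ℕ∞) w) (hcu : IsCompact (tsupport u)) :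
    ∫ x, (∑ i, pd u i x * pd w i x) * Real.exp (-V x)
      = -2 * ∫ x, Lgen V u x * w x * Real.exp (-V x) := by
  have hρc : Continuous (fun x : EuclideanSpace ℝ (Fin n) => Real.exp (-V x)) :=
    continuous_exp.comp (hV.continuous.neg)
  have hsupp1 : ∀ i, ∀ x ∉ tsupport u, pd u i x = 0 := fun i x hx => pd_zero_of_not_mem hx i
  have hsupp2 : ∀ i, ∀ x ∉ tsupport u, pd (pd u i) i x = 0 := fun i x hx =>
    pd_zero_of_not_mem (fun h => hx (tsupport_pd_subset u i h)) i
  have hintA : ∀ i : Fin n, Integrable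
      (fun x => pd (pd u i) i x * (w x * Real.exp (-V x))) volume := by
    intro i
    apply integrable_cs (((contDiff_pd (contDiff_pd hu i) i).continuous).mul
      ((hw.continuous).mul hρc)) hcu
    intro x hx; simp only [Pi.mul_apply]; rw [hsupp2 i x hx, zero_mul]
  have hintB : ∀ i : Fin n, Integrable
      (fun x => pd u i x * pd w i x * Real.exp (-V x)) volume := by
    intro i
    apply integrable_cs ((((contDiff_pd hu i).continuous).mul
      ((contDiff_pd hw i).continuous)).mul hρc) hcu
    intro x hx; simp only [Pi.mul_apply]; rw [hsupp1 i x hx]; ring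
  have hintC : ∀ i : Fin n, Integrable
      (fun x => pd V i x * pd u i x * w x * Real.exp (-V x)) volume := by
    intro i
    apply integrable_cs (((((contDiff_pd hV i).continuous).mul
      ((contDiff_pd hu i).continuous)).mul hw.continuous).mul hρc) hcu
    intro x hx; simp only [Pi.mul_apply]; rw [hsupp1 i x hx]; ring
  -- left side as a sum of integrals
  have hLHS : ∫ x, (∑ i, pd u i x * pd w i x) * Real.exp (-V x)
      = ∑ i, ∫ x, pd u i x * pd w i x * Real.exp (-V x) := by
    rw [← integral_finset_sum _ (fun i _ => hintB i)]
    congr 1; funext x; rw [← Finset.sum_mul]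
  -- right side integral in terms of A and C
  have hRHS : ∫ x, Lgen V u x * w x * Real.exp (-V x)
      = ∑ i, ((1/2) * (∫ x, pd (pd u i) i x * (w x * Real.exp (-V x)))
          - (1/2) * (∫ x, pd V i x * pd u i x * w x * Real.exp (-V x))) := by
    have hpt : ∀ x, Lgen V u x * w x * Real.exp (-V x)
        = ∑ i, ((1/2) * (pd (pd u i) i x * (w x * Real.exp (-V x)))
            - (1/2) * (pd V i x * pd u i x * w x * Real.exp (-V x))) := by
      intro x
      symm
      rw [Finset.sum_sub_distrib, ← Finset.mul_sum, ← Finset.mul_sum, ← Finset.sum_mul,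
        ← Finset.sum_mul, ← Finset.sum_mul, Lgen_eq]
      ring
    rw [show (fun x => Lgen V u x * w x * Real.exp (-V x)) = fun x =>
        ∑ i, ((1/2) * (pd (pd u i) i x * (w x * Real.exp (-V x)))
          - (1/2) * (pd V i x * pd u i x * w x * Real.exp (-V x))) from funext hpt]
    rw [integral_finset_sum]
    · exact Finset.sum_congr rfl fun i _ => by
        rw [integral_sub ((hintA i).const_mul _) ((hintC i).const_mul _),
          integral_const_mul, integral_const_mul]
    · exact fun i _ => ((hintA i).const_mul _).sub ((hintC i).const_mul _)
  have hI : ∀ i : Fin n, ∫ x, pd (pd u i) i x * (w x * Real.exp (-V x))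
      = (-∫ x, pd u i x * pd w i x * Real.exp (-V x))
        + ∫ x, pd V i x * pd u i x * w x * Real.exp (-V x) :=
    fun i => ibp_coord hV hu hw hcu i
  rw [hLHS, hRHS]
  rw [Finset.mul_sum]
  refine Finset.sum_congr rfl fun i _ => ?_
  rw [hI i]
  ring

section Mixed
variable {n : ℕ}

local notation "E" => EuclideanSpace ℝ (Fin n)

/-- Spatial partial derivative of a slice equals full derivative in direction `(0, v)`. -/
lemma partial_eq {F : ℝ × E → ℝ} (hF : ContDiff ℝ (⊤ : ℕ∞) F) (s : ℝ) (x v : E) :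
    fderiv ℝ (fun y => F (s, y)) x v = fderiv ℝ F (s, x) (0, v) := by
  have hγ : HasFDerivAt (fun y : E => (s, y))
      ((0 : E →L[ℝ] ℝ).prod (ContinuousLinearMap.id ℝ E)) x :=
    HasFDerivAt.prodMk (hasFDerivAt_const s x) (hasFDerivAt_id x)
  have h := ((hF.differentiable (by simp) (s, x)).hasFDerivAt).comp x hγ
  have h' : HasFDerivAt (fun y => F (s, y))
      ((fderiv ℝ F (s, x)).comp ((0 : E →L[ℝ] ℝ).prod (ContinuousLinearMap.id ℝ E))) x := h
  rw [h'.fderiv]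
  simp

/-- Time derivative of a slice equals full derivative in direction `(1, 0)`. -/
lemma slice_hasDerivAt {F : ℝ × E → ℝ} (hF : ContDiff ℝ (⊤ : ℕ∞) F) (t : ℝ) (x : E) :
    HasDerivAt (fun s => F (s, x)) (fderiv ℝ F (t, x) (1, 0)) t := by
  have hγ : HasDerivAt (fun s : ℝ => (s, x)) ((1 : ℝ), (0 : E)) t :=
    HasDerivAt.prodMk (hasDerivAt_id t) (hasDerivAt_const t x)
  exact ((hF.differentiable (by simp) (t, x)).hasFDerivAt).comp_hasDerivAt t hγ

/-- Commuting time and space derivatives for jointly smooth functions. -/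
lemma mixed_hasDerivAt {F : ℝ × E → ℝ} (hF : ContDiff ℝ (⊤ : ℕ∞) F) (t : ℝ) (x v : E) :
    HasDerivAt (fun s => fderiv ℝ (fun y => F (s, y)) x v)
      (fderiv ℝ (fun y => fderiv ℝ F (t, y) (1, 0)) x v) t := by
  have hF' : ContDiff ℝ (⊤ : ℕ∞) (fderiv ℝ F) := hF.fderiv_right (by simp)
  have hF'd : Differentiable ℝ (fderiv ℝ F) := hF'.differentiable (by simp)
  -- rewrite the function being differentiated
  have e1 : (fun s => fderiv ℝ (fun y => F (s, y)) x v)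
      = fun s => (fun p => fderiv ℝ F p (0, v)) (s, x) :=
    funext fun s => partial_eq hF s x v
  rw [e1]
  have hG1 : ContDiff ℝ (⊤ : ℕ∞) (fun p => fderiv ℝ F p (0, v)) := hF'.clm_apply contDiff_const
  have h2 : HasDerivAt (fun s => (fun p => fderiv ℝ F p (0, v)) (s, x))
      (fderiv ℝ (fun p => fderiv ℝ F p (0, v)) (t, x) (1, 0)) t :=
    slice_hasDerivAt hG1 t x
  have hclm : ∀ (a b : ℝ × E),
      fderiv ℝ (fun p => fderiv ℝ F p a) (t, x) b = fderiv ℝ (fderiv ℝ F) (t, x) b a := by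
    intro a b
    rw [fderiv_clm_apply (hF'd (t, x)) (differentiableAt_const a)]
    simp
  have hsymm : fderiv ℝ (fderiv ℝ F) (t, x) (1, 0) (0, v)
      = fderiv ℝ (fderiv ℝ F) (t, x) (0, v) (1, 0) :=
    second_derivative_symmetric (f := F) (fun y => (hF.differentiable (by simp) y).hasFDerivAt)
      (hF'd (t, x)).hasFDerivAt _ _
  have e3 : fderiv ℝ (fun y => fderiv ℝ F (t, y) (1, 0)) x v
      = fderiv ℝ (fun p => fderiv ℝ F p (1, 0)) (t, x) (0, v) :=
    partial_eq (hF'.clm_apply contDiff_const) t x v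
  rw [e3, hclm, ← hsymm, ← hclm]
  exact h2

end Mixed

section Wrappers
variable {n : ℕ}
local notation "E" => EuclideanSpace ℝ (Fin n)

/-- Time derivative function of a two-variable function. -/
noncomputable def tderiv (F : ℝ × EuclideanSpace ℝ (Fin n) → ℝ) (t : ℝ)
    (y : EuclideanSpace ℝ (Fin n)) : ℝ :=
  fderiv ℝ F (t, y) (1, 0)

lemma contDiff_slice {F : ℝ × E → ℝ} (hF : ContDiff ℝ (⊤ : ℕ∞) F) (t : ℝ) :
    ContDiff ℝ (⊤ : ℕ∞) (fun y => F (t, y)) :=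
  hF.comp (contDiff_const.prodMk contDiff_id)

lemma contDiff_W {F : ℝ × E → ℝ} (hF : ContDiff ℝ (⊤ : ℕ∞) F) :
    ContDiff ℝ (⊤ : ℕ∞) (fun p => fderiv ℝ F p ((1 : ℝ), (0 : E))) :=
  (hF.fderiv_right (by simp)).clm_apply contDiff_const

lemma contDiff_tderiv {F : ℝ × E → ℝ} (hF : ContDiff ℝ (⊤ : ℕ∞) F) (t : ℝ) :
    ContDiff ℝ (⊤ : ℕ∞) (tderiv F t) :=
  contDiff_slice (contDiff_W hF) t

lemma mixedA {F : ℝ × E → ℝ} (hF : ContDiff ℝ (⊤ : ℕ∞) F) (t : ℝ) (x : E) (i : Fin n) :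
    HasDerivAt (fun s => pd (fun y => F (s, y)) i x) (pd (tderiv F t) i x) t :=
  mixed_hasDerivAt hF t x _

lemma tderiv_eq {F : ℝ × E → ℝ} (hF : ContDiff ℝ (⊤ : ℕ∞) F) {t : ℝ} {x : E} {c : ℝ}
    (h : HasDerivAt (fun s => F (s, x)) c t) : tderiv F t x = c :=
  (slice_hasDerivAt hF t x).unique h

lemma pd_slice {F : ℝ × E → ℝ} (hF : ContDiff ℝ (⊤ : ℕ∞) F) (t : ℝ) (x : E) (i : Fin n) :
    pd (fun y => F (t, y)) i x = fderiv ℝ F (t, x) (0, EuclideanSpace.single i 1) :=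
  partial_eq hF t x _

lemma pd_tderiv {F : ℝ × E → ℝ} (hF : ContDiff ℝ (⊤ : ℕ∞) F) (t : ℝ) (x : E) (i : Fin n) :
    pd (tderiv F t) i x
      = fderiv ℝ (fun p => fderiv ℝ F p ((1:ℝ), (0:E))) (t, x) (0, EuclideanSpace.single i 1) :=
  partial_eq (contDiff_W hF) t x _

lemma cont_pd2 {F : ℝ × E → ℝ} (hF : ContDiff ℝ (⊤ : ℕ∞) F) (v : ℝ × E) :
    Continuous (fun p => fderiv ℝ F p v) :=
  ((hF.fderiv_right (m := (⊤ : ℕ∞)) (by simp)).clm_apply contDiff_const).continuous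

end Wrappers
end S9

open S9

/-- Conservation of `∫⟨∇f_t, ∇g_t⟩ dm` along the forward/backward heat
equations `∂ₜf = εLf`, `∂ₜg = -εLg` with `m = e^{-V}·Leb`. -/
theorem stmt_9 {n : ℕ} (ε : ℝ) (hε : 0 < ε)
    (V : EuclideanSpace ℝ (Fin n) → ℝ) (hV : ContDiff ℝ (⊤ : ℕ∞) V)
    (m : Measure (EuclideanSpace ℝ (Fin n)))
    (hm : m = volume.withDensity (fun x => ENNReal.ofReal (Real.exp (-V x))))
    (f g : ℝ → EuclideanSpace ℝ (Fin n) → ℝ)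
    (hfsm : ContDiff ℝ (⊤ : ℕ∞) (fun p : ℝ × EuclideanSpace ℝ (Fin n) => f p.1 p.2))
    (hgsm : ContDiff ℝ (⊤ : ℕ∞) (fun p : ℝ × EuclideanSpace ℝ (Fin n) => g p.1 p.2))
    (hsupp : ∃ K : Set (EuclideanSpace ℝ (Fin n)), IsCompact K ∧
      ∀ t ∈ Icc (0:ℝ) 1, tsupport (f t) ⊆ K ∧ tsupport (g t) ⊆ K)
    (hfpde : ∀ t ∈ Icc (0:ℝ) 1, ∀ x,
      HasDerivAt (fun s => f s x) (ε * Lgen V (f t) x) t)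
    (hgpde : ∀ t ∈ Icc (0:ℝ) 1, ∀ x,
      HasDerivAt (fun s => g s x) (-(ε * Lgen V (g t) x)) t) :
    ∀ s ∈ Icc (0:ℝ) 1, ∀ t ∈ Icc (0:ℝ) 1,
      ∫ x, ⟪gradient (f s) x, gradient (g s) x⟫ ∂m
        = ∫ x, ⟪gradient (f t) x, gradient (g t) x⟫ ∂m := by
  classical
  obtain ⟨K, hK, hKsupp⟩ := hsupp
  -- basic smoothness of slices
  have hfc : ∀ s : ℝ, ContDiff ℝ (⊤ : ℕ∞) (f s) := fun s => contDiff_slice hfsm s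
  have hgc : ∀ s : ℝ, ContDiff ℝ (⊤ : ℕ∞) (g s) := fun s => contDiff_slice hgsm s
  have hsuppf : ∀ t ∈ Icc (0:ℝ) 1, tsupport (f t) ⊆ K := fun t ht => (hKsupp t ht).1
  have hsuppg : ∀ t ∈ Icc (0:ℝ) 1, tsupport (g t) ⊆ K := fun t ht => (hKsupp t ht).2
  -- measure facts
  have hdmeas : Measurable (fun x : EuclideanSpace ℝ (Fin n) => Real.toNNReal (Real.exp (-V x))) :=
    (continuous_real_toNNReal.comp (Real.continuous_exp.comp hV.continuous.neg)).measurable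
  have hm' : m = volume.withDensity
      (fun x => ((Real.toNNReal (Real.exp (-V x)) : NNReal) : ENNReal)) := hm
  have hInt : ∀ φ : EuclideanSpace ℝ (Fin n) → ℝ,
      ∫ x, φ x ∂m = ∫ x, Real.exp (-V x) * φ x := by
    intro φ
    rw [hm', integral_withDensity_eq_integral_smul hdmeas]
    congr 1; funext x
    simp [NNReal.smul_def, Real.coe_toNNReal _ (Real.exp_pos _).le]
  have hIntgr : ∀ ψ : EuclideanSpace ℝ (Fin n) → ℝ, Continuous ψ → (∀ x ∉ K, ψ x = 0) →
      Integrable ψ m := by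
    intro ψ hψ hψ0
    rw [hm', integrable_withDensity_iff_integrable_smul hdmeas]
    apply integrable_cs _ hK
    · intro x hx; rw [hψ0 x hx, smul_zero]
    · exact (continuous_real_toNNReal.comp
        (Real.continuous_exp.comp hV.continuous.neg)).smul hψ
  have hmK : m K < ⊤ := by
    obtain ⟨C₃, hC₃⟩ := hK.exists_bound_of_continuousOn
      ((Real.continuous_exp.comp hV.continuous.neg).continuousOn)
    have h1 : m K = ∫⁻ x in K, ENNReal.ofReal (Real.exp (-V x)) ∂volume := by
      rw [hm, withDensity_apply _ hK.measurableSet]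
    have h2 : (∫⁻ x in K, ENNReal.ofReal (Real.exp (-V x)) ∂volume)
        ≤ ∫⁻ _ in K, ENNReal.ofReal C₃ ∂volume := by
      apply setLIntegral_mono measurable_const
      intro x hx
      exact ENNReal.ofReal_le_ofReal ((le_abs_self _).trans (hC₃ x hx))
    rw [h1]
    refine lt_of_le_of_lt h2 ?_
    rw [setLIntegral_const]
    exact ENNReal.mul_lt_top ENNReal.ofReal_lt_top hK.measure_lt_top
  have hbint : ∀ C : ℝ, Integrable (K.indicator (fun _ => C)) m := by
    intro C
    rw [integrable_indicator_iff hK.measurableSet]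
    exact integrableOn_const hmK.ne
  -- PDE identification of the time derivatives
  have hWf_eq : ∀ t ∈ Icc (0:ℝ) 1,
      tderiv (fun p : ℝ × EuclideanSpace ℝ (Fin n) => f p.1 p.2) t
        = fun y => ε * Lgen V (f t) y := by
    intro t ht
    funext y
    exact tderiv_eq hfsm (hfpde t ht y)
  have hWg_eq : ∀ t ∈ Icc (0:ℝ) 1,
      tderiv (fun p : ℝ × EuclideanSpace ℝ (Fin n) => g p.1 p.2) t
        = fun y => -(ε * Lgen V (g t) y) := by
    intro t ht
    funext y
    exact tderiv_eq hgsm (hgpde t ht y)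
  -- the integrand and its time derivative
  set F : ℝ → EuclideanSpace ℝ (Fin n) → ℝ :=
    fun τ x => ∑ i, pd (f τ) i x * pd (g τ) i x with hFdef
  set F' : ℝ → EuclideanSpace ℝ (Fin n) → ℝ :=
    fun τ x => ∑ i,
      (pd (tderiv (fun p : ℝ × EuclideanSpace ℝ (Fin n) => f p.1 p.2) τ) i x * pd (g τ) i x
        + pd (f τ) i x * pd (tderiv (fun p : ℝ × EuclideanSpace ℝ (Fin n) => g p.1 p.2) τ) i x)
    with hF'def
  have hFcont : ∀ τ, Continuous (F τ) := fun τ =>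
    continuous_finset_sum _ fun i _ =>
      ((contDiff_pd (hfc τ) i).continuous).mul ((contDiff_pd (hgc τ) i).continuous)
  have hF'cont : ∀ τ, Continuous (F' τ) := fun τ =>
    continuous_finset_sum _ fun i _ =>
      (((contDiff_pd (contDiff_tderiv hfsm τ) i).continuous).mul
        ((contDiff_pd (hgc τ) i).continuous)).add
      (((contDiff_pd (hfc τ) i).continuous).mul
        ((contDiff_pd (contDiff_tderiv hgsm τ) i).continuous))
  have hFzero : ∀ t ∈ Icc (0:ℝ) 1, ∀ x ∉ K, F t x = 0 := by
    intro t ht x hx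
    apply Finset.sum_eq_zero
    intro i _
    rw [pd_zero_of_not_mem (fun h => hx (hsuppf t ht h)) i, zero_mul]
  have hF'zero : ∀ t ∈ Icc (0:ℝ) 1, ∀ x ∉ K, F' t x = 0 := by
    intro t ht x hx
    apply Finset.sum_eq_zero
    intro i _
    rw [pd_zero_of_not_mem (fun h => hx (hsuppf t ht h)) i,
      pd_zero_of_not_mem (fun h => hx (hsuppg t ht h)) i, zero_mul, mul_zero, add_zero]
  -- the time derivative of F
  have hFderiv : ∀ (t : ℝ) (x : EuclideanSpace ℝ (Fin n)),
      HasDerivAt (fun τ => F τ x) (F' t x) t := by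
    intro t x
    apply HasDerivAt.fun_sum
    intro i _
    exact (mixedA hfsm t x i).mul (mixedA hgsm t x i)
  -- joint continuity bounds on [0,1] × K
  have hFrep : ∀ (t : ℝ) (x : EuclideanSpace ℝ (Fin n)), F t x
      = ∑ i, fderiv ℝ (fun p : ℝ × EuclideanSpace ℝ (Fin n) => f p.1 p.2) (t, x)
          (0, EuclideanSpace.single i 1)
        * fderiv ℝ (fun p : ℝ × EuclideanSpace ℝ (Fin n) => g p.1 p.2) (t, x)
          (0, EuclideanSpace.single i 1) := fun t x =>
    Finset.sum_congr rfl fun i _ =>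
      congrArg₂ (· * ·) (pd_slice hfsm t x i) (pd_slice hgsm t x i)
  have hF'rep : ∀ (t : ℝ) (x : EuclideanSpace ℝ (Fin n)), F' t x
      = ∑ i,
        (fderiv ℝ (fun p : ℝ × EuclideanSpace ℝ (Fin n) =>
            fderiv ℝ (fun q : ℝ × EuclideanSpace ℝ (Fin n) => f q.1 q.2) p
              ((1:ℝ), (0 : EuclideanSpace ℝ (Fin n)))) (t, x) (0, EuclideanSpace.single i 1)
          * fderiv ℝ (fun p : ℝ × EuclideanSpace ℝ (Fin n) => g p.1 p.2) (t, x)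
              (0, EuclideanSpace.single i 1)
        + fderiv ℝ (fun p : ℝ × EuclideanSpace ℝ (Fin n) => f p.1 p.2) (t, x)
            (0, EuclideanSpace.single i 1)
          * fderiv ℝ (fun p : ℝ × EuclideanSpace ℝ (Fin n) =>
              fderiv ℝ (fun q : ℝ × EuclideanSpace ℝ (Fin n) => g q.1 q.2) p
                ((1:ℝ), (0 : EuclideanSpace ℝ (Fin n)))) (t, x)
              (0, EuclideanSpace.single i 1)) := fun t x =>
    Finset.sum_congr rfl fun i _ =>
      congrArg₂ (· + ·)
        (congrArg₂ (· * ·) (pd_tderiv hfsm t x i) (pd_slice hgsm t x i))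
        (congrArg₂ (· * ·) (pd_slice hfsm t x i) (pd_tderiv hgsm t x i))
  obtain ⟨C₁, hC₁⟩ : ∃ C₁ : ℝ, ∀ t ∈ Icc (0:ℝ) 1, ∀ x ∈ K, ‖F t x‖ ≤ C₁ := by
    obtain ⟨C₁, hC₁'⟩ := (isCompact_Icc.prod hK).exists_bound_of_continuousOn
      (Continuous.continuousOn (continuous_finset_sum _ fun i _ =>
        (cont_pd2 hfsm _).mul (cont_pd2 hgsm _)))
    refine ⟨C₁, fun t ht x hx => ?_⟩
    rw [hFrep t x]
    simpa using hC₁' (t, x) (Set.mk_mem_prod ht hx)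
  obtain ⟨C₂, hC₂⟩ : ∃ C₂ : ℝ, ∀ t ∈ Icc (0:ℝ) 1, ∀ x ∈ K, ‖F' t x‖ ≤ C₂ := by
    obtain ⟨C₂, hC₂'⟩ := (isCompact_Icc.prod hK).exists_bound_of_continuousOn
      (Continuous.continuousOn (continuous_finset_sum _ fun i _ =>
        ((cont_pd2 (contDiff_W hfsm) _).mul (cont_pd2 hgsm _)).add
          ((cont_pd2 hfsm _).mul (cont_pd2 (contDiff_W hgsm) _))))
    refine ⟨C₂, fun t ht x hx => ?_⟩
    rw [hF'rep t x]
    simpa using hC₂' (t, x) (Set.mk_mem_prod ht hx)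
  -- the integral of F' vanishes on [0,1] (Green's identity / self-adjointness)
  have hzero : ∀ t ∈ Icc (0:ℝ) 1, ∫ x, F' t x ∂m = 0 := by
    intro t ht
    have hLf : ContDiff ℝ (⊤ : ℕ∞) (Lgen V (f t)) := contDiff_Lgen hV (hfc t)
    have hLg : ContDiff ℝ (⊤ : ℕ∞) (Lgen V (g t)) := contDiff_Lgen hV (hgc t)
    have hcf : IsCompact (tsupport (f t)) :=
      hK.of_isClosed_subset isClosed_closure (hsuppf t ht)
    have hcg : IsCompact (tsupport (g t)) :=
      hK.of_isClosed_subset isClosed_closure (hsuppg t ht)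
    have hρc : Continuous (fun x : EuclideanSpace ℝ (Fin n) => Real.exp (-V x)) :=
      Real.continuous_exp.comp hV.continuous.neg
    have hpdf' : ∀ (i : Fin n) (x : EuclideanSpace ℝ (Fin n)),
        pd (tderiv (fun p : ℝ × EuclideanSpace ℝ (Fin n) => f p.1 p.2) t) i x
          = ε * pd (Lgen V (f t)) i x := by
      intro i x
      rw [hWf_eq t ht]
      show fderiv ℝ (fun y => ε * Lgen V (f t) y) x (EuclideanSpace.single i 1) = _
      rw [fderiv_const_mul ((hLf.differentiable (by simp)) x)]
      simp [pd]
    have hpdg' : ∀ (i : Fin n) (x : EuclideanSpace ℝ (Fin n)),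
        pd (tderiv (fun p : ℝ × EuclideanSpace ℝ (Fin n) => g p.1 p.2) t) i x
          = -(ε * pd (Lgen V (g t)) i x) := by
      intro i x
      rw [hWg_eq t ht]
      show fderiv ℝ (fun y => -(ε * Lgen V (g t) y)) x (EuclideanSpace.single i 1) = _
      rw [fderiv_fun_neg, fderiv_const_mul ((hLg.differentiable (by simp)) x)]
      simp [pd]
    have hP1 : Integrable
        (fun x => (∑ i, pd (g t) i x * pd (Lgen V (f t)) i x) * Real.exp (-V x)) volume := by
      apply integrable_cs ((continuous_finset_sum _ fun i _ =>
        ((contDiff_pd (hgc t) i).continuous).mul ((contDiff_pd hLf i).continuous)).mul hρc) hK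
      intro x hx
      have h0 : ∀ i : Fin n, pd (g t) i x = 0 := fun i =>
        pd_zero_of_not_mem (fun h => hx (hsuppg t ht h)) i
      simp [h0]
    have hP2 : Integrable
        (fun x => (∑ i, pd (f t) i x * pd (Lgen V (g t)) i x) * Real.exp (-V x)) volume := by
      apply integrable_cs ((continuous_finset_sum _ fun i _ =>
        ((contDiff_pd (hfc t) i).continuous).mul ((contDiff_pd hLg i).continuous)).mul hρc) hK
      intro x hx
      have h0 : ∀ i : Fin n, pd (f t) i x = 0 := fun i =>
        pd_zero_of_not_mem (fun h => hx (hsuppf t ht h)) i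
      simp [h0]
    rw [hInt]
    have hptw : (fun x => Real.exp (-V x) * F' t x) = fun x =>
        ε * ((∑ i, pd (g t) i x * pd (Lgen V (f t)) i x) * Real.exp (-V x))
          - ε * ((∑ i, pd (f t) i x * pd (Lgen V (g t)) i x) * Real.exp (-V x)) := by
      funext x
      simp only [hF'def]
      simp only [hpdf', hpdg']
      rw [Finset.mul_sum, Finset.sum_mul, Finset.sum_mul, Finset.mul_sum, Finset.mul_sum,
        ← Finset.sum_sub_distrib]
      exact Finset.sum_congr rfl fun i _ => by ring
    rw [hptw, integral_sub (hP1.const_mul ε) (hP2.const_mul ε), integral_const_mul,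
      integral_const_mul, green hV (hgc t) hLf hcg, green hV (hfc t) hLg hcf]
    have hcomm : (∫ x, Lgen V (g t) x * Lgen V (f t) x * Real.exp (-V x))
        = ∫ x, Lgen V (f t) x * Lgen V (g t) x * Real.exp (-V x) := by
      congr 1; funext x; ring
    rw [hcomm]
    ring
  -- derivative of the integral is zero in the interior
  have hder : ∀ t₀ ∈ Ioo (0:ℝ) 1, HasDerivAt (fun τ => ∫ x, F τ x ∂m) 0 t₀ := by
    intro t₀ ht₀
    have ht₀' : t₀ ∈ Icc (0:ℝ) 1 := Ioo_subset_Icc_self ht₀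
    have hδpos : 0 < min t₀ (1 - t₀) := lt_min ht₀.1 (by linarith [ht₀.2])
    have hball : ∀ τ ∈ Metric.ball t₀ (min t₀ (1 - t₀)), τ ∈ Icc (0:ℝ) 1 := by
      intro τ hτ
      rw [Metric.mem_ball, Real.dist_eq] at hτ
      have h1 := abs_lt.mp hτ
      have h2 := min_le_left t₀ (1 - t₀)
      have h3 := min_le_right t₀ (1 - t₀)
      constructor <;> linarith
    have key := hasDerivAt_integral_of_dominated_loc_of_deriv_le (μ := m)
      (F := F) (F' := F') (bound := K.indicator fun _ => C₂) (Metric.ball_mem_nhds t₀ hδpos)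
      (Filter.Eventually.of_forall fun τ => (hFcont τ).aestronglyMeasurable)
      (hIntgr _ (hFcont t₀) (hFzero t₀ ht₀'))
      ((hF'cont t₀).aestronglyMeasurable)
      (Filter.Eventually.of_forall fun x τ hτ => by
        by_cases hx : x ∈ K
        · rw [Set.indicator_of_mem hx]
          exact hC₂ τ (hball τ hτ) x hx
        · rw [Set.indicator_of_notMem hx, hF'zero τ (hball τ hτ) x hx, norm_zero])
      (hbint C₂)
      (Filter.Eventually.of_forall fun x τ _ => hFderiv τ x)
    have h := key.2
    rwa [hzero t₀ ht₀'] at h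
  -- continuity of the integral on [0,1]
  have hHcont : ∀ t₀ ∈ Icc (0:ℝ) 1,
      ContinuousWithinAt (fun τ => ∫ x, F τ x ∂m) (Icc (0:ℝ) 1) t₀ := by
    intro t₀ ht₀
    apply continuousWithinAt_of_dominated (bound := K.indicator fun _ => C₁)
    · exact Filter.Eventually.of_forall fun τ => (hFcont τ).aestronglyMeasurable
    · filter_upwards [self_mem_nhdsWithin] with τ hτ
      refine Filter.Eventually.of_forall fun x => ?_
      by_cases hx : x ∈ K
      · rw [Set.indicator_of_mem hx]
        exact hC₁ τ hτ x hx
      · rw [Set.indicator_of_notMem hx, hFzero τ hτ x hx, norm_zero]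
    · exact hbint C₁
    · exact Filter.Eventually.of_forall fun x =>
        ((hFderiv t₀ x).continuousAt).continuousWithinAt
  -- glue: the integral is constant on [0,1]
  have hIoo : ∀ a ∈ Ioo (0:ℝ) 1, ∀ b ∈ Ioo (0:ℝ) 1, a ≤ b →
      (∫ x, F a x ∂m) = ∫ x, F b x ∂m := by
    intro a ha b hb hab
    have h := constant_of_has_deriv_right_zero (f := fun τ => ∫ x, F τ x ∂m) (a := a) (b := b)
      (fun τ hτ => ((hder τ ⟨lt_of_lt_of_le ha.1 hτ.1, lt_of_le_of_lt hτ.2 hb.2⟩).continuousAt).continuousWithinAt)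
      (fun τ hτ => (hder τ ⟨lt_of_lt_of_le ha.1 hτ.1, lt_trans hτ.2 hb.2⟩).hasDerivWithinAt)
    exact (h b (right_mem_Icc.2 hab)).symm
  have hIoo' : ∀ a ∈ Ioo (0:ℝ) 1, (∫ x, F a x ∂m) = ∫ x, F (1/2) x ∂m := by
    intro a ha
    have hhalf : (1/2 : ℝ) ∈ Ioo (0:ℝ) 1 := by norm_num
    rcases le_total a (1/2) with h | h
    · exact hIoo a ha (1/2) hhalf h
    · exact (hIoo (1/2) hhalf a ha h).symm
  have hglue : ∀ t ∈ Icc (0:ℝ) 1, (∫ x, F t x ∂m) = ∫ x, F (1/2) x ∂m := by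
    intro t₀ ht₀
    by_cases hmem : t₀ ∈ Ioo (0:ℝ) 1
    · exact hIoo' t₀ hmem
    · have hneBot : (nhdsWithin t₀ (Ioo (0:ℝ) 1)).NeBot := by
        rw [← mem_closure_iff_nhdsWithin_neBot, closure_Ioo (by norm_num : (0:ℝ) ≠ 1)]
        exact ht₀
      have h1 : Filter.Tendsto (fun τ => ∫ x, F τ x ∂m) (nhdsWithin t₀ (Ioo (0:ℝ) 1))
          (nhds (∫ x, F t₀ x ∂m)) :=
        (hHcont t₀ ht₀).mono_left (nhdsWithin_mono t₀ Ioo_subset_Icc_self)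
      have h2 : Filter.Tendsto (fun τ => ∫ x, F τ x ∂m) (nhdsWithin t₀ (Ioo (0:ℝ) 1))
          (nhds (∫ x, F (1/2) x ∂m)) := by
        apply Filter.Tendsto.congr' _ tendsto_const_nhds
        filter_upwards [self_mem_nhdsWithin] with τ hτ
        exact (hIoo' τ hτ).symm
      exact tendsto_nhds_unique h1 h2
  -- conclude
  intro s hs t ht
  have hre : ∀ τ : ℝ, ∫ x, ⟪gradient (f τ) x, gradient (g τ) x⟫ ∂m = ∫ x, F τ x ∂m := by
    intro τ
    congr 1
    funext x
    exact inner_grad (f τ) (g τ) x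
  rw [hre s, hre t, hglue s hs, hglue t ht]
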